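/- Let (X,d) be a complete metric space, M a nonempty proper closed subset of X, and F : X∖M → (0,∞) a positive function that admits a continuous extension F̃ : X → [0,∞) with F̃(x) = 0 for every x ∈ M. Then the metric space (X∖M, v), where v(x,y) = 2·log((d(x,y) + max{F(x), F(y)}) / √(F(x)·F(y))), is complete: every Cauchy sequence in (X∖M, v) converges in (X∖M, v). -/

import Mathlib

open Real Filter

/-- Generalized Ibragimov function. -/
noncomputable def vIb {X : Type*} [MetricSpace X] (F : X → ℝ) (x y : X) : ℝ :=
  2 * Real.log ((dist x y + max (F x) (F y)) / Real.sqrt (F x * F y))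

/-!
Since `√(F x F y) ≤ max (F x) (F y)`, the metric `v` dominates both `|log F x - log F y|` and
`2 log (1 + d(x, y) / max (F x) (F y))`. Along a `v`-Cauchy sequence `uₙ` the numbers `log F uₙ`
therefore form a Cauchy sequence, so `F uₙ` converges to some `ℓ > 0`; as `F uₙ` is then bounded,
the second bound makes `uₙ` `d`-Cauchy, hence `d`-convergent to some `x`. Continuity of `F̃` gives
`F̃ x = ℓ > 0`, so `x ∉ M`, and then `v(uₙ, x) → v(x, x) = 0`.
-/

namespace vIb

variable {X : Type*} [MetricSpace X] {F : X → ℝ} {x y : X}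

theorem self (F : X → ℝ) (x : X) : vIb F x x = 0 := by
  rcases eq_or_ne (F x) 0 with h | h
  · simp [vIb, h]
  · rw [vIb, dist_self, zero_add, max_self, sqrt_mul_self_eq_abs, log_div h (abs_ne_zero.2 h),
      log_abs, sub_self, mul_zero]

theorem eq_two_mul_log_sub (hx : 0 < F x) (hy : 0 < F y) :
    vIb F x y = 2 * log (dist x y + max (F x) (F y)) - log (F x) - log (F y) := by
  have hN : 0 < dist x y + max (F x) (F y) := by positivity
  rw [vIb, log_div hN.ne' (by positivity), log_sqrt (by positivity), log_mul hx.ne' hy.ne']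
  ring

theorem abs_log_sub_log_le (hx : 0 < F x) (hy : 0 < F y) :
    |log (F x) - log (F y)| ≤ vIb F x y := by
  have hlx : log (F x) ≤ log (dist x y + max (F x) (F y)) :=
    log_le_log hx (le_add_of_nonneg_of_le dist_nonneg (le_max_left _ _))
  have hly : log (F y) ≤ log (dist x y + max (F x) (F y)) :=
    log_le_log hy (le_add_of_nonneg_of_le dist_nonneg (le_max_right _ _))
  rw [eq_two_mul_log_sub hx hy, abs_sub_le_iff]
  constructor <;> linarith

theorem nonneg (hx : 0 < F x) (hy : 0 < F y) : 0 ≤ vIb F x y :=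
  (abs_nonneg _).trans (abs_log_sub_log_le hx hy)

theorem dist_le (hx : 0 < F x) (hy : 0 < F y) :
    dist x y ≤ (exp (vIb F x y / 2) - 1) * max (F x) (F y) := by
  have hmax : 0 < max (F x) (F y) := lt_max_of_lt_left hx
  have hsqrt : √(F x * F y) ≤ max (F x) (F y) := by
    calc √(F x * F y) ≤ √(max (F x) (F y) * max (F x) (F y)) :=
          sqrt_le_sqrt (mul_le_mul (le_max_left _ _) (le_max_right _ _) hy.le hmax.le)
      _ = max (F x) (F y) := sqrt_mul_self hmax.le
  have hexp : exp (vIb F x y / 2) = (dist x y + max (F x) (F y)) / √(F x * F y) := by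
    rw [vIb, mul_div_cancel_left₀ _ two_ne_zero, exp_log (by positivity)]
  have : dist x y + max (F x) (F y) ≤ exp (vIb F x y / 2) * max (F x) (F y) := by
    rw [hexp, div_mul_eq_mul_div, le_div_iff₀ (by positivity)]
    exact mul_le_mul_of_nonneg_left hsqrt (by positivity)
  linarith

theorem tendsto_zero_of_tendsto {α : Type*} {l : Filter α} {f : α → X}
    (hf : Tendsto f l (nhds x)) (hF : Tendsto (fun a => F (f a)) l (nhds (F x)))
    (hx : F x ≠ 0) : Tendsto (fun a => vIb F (f a) x) l (nhds 0) := by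
  have hsqrt : √(F x * F x) = |F x| := sqrt_mul_self_eq_abs _
  have hconst : Tendsto (fun _ => F x) l (nhds (F x)) := tendsto_const_nhds
  have hquot := ((tendsto_iff_dist_tendsto_zero.mp hf).add (hF.max hconst)).div
    (hF.mul hconst).sqrt (by simpa [hsqrt])
  have := (hquot.log (by simpa [hsqrt])).const_mul 2
  have hself : 2 * log ((dist x x + max (F x) (F x)) / √(F x * F x)) = 0 := self F x
  rw [dist_self] at hself
  rwa [hself] at this

section Sequence

variable {β : Type*} [Nonempty β] [SemilatticeSup β] {u : β → X}

theorem exists_tendsto_pos_of_tendsto_zero (hF : ∀ n, 0 < F (u n))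
    (hv : Tendsto (fun p : β × β => vIb F (u p.1) (u p.2)) atTop (nhds 0)) :
    ∃ ℓ > 0, Tendsto (fun n => F (u n)) atTop (nhds ℓ) := by
  have hlog : CauchySeq fun n => log (F (u n)) :=
    cauchySeq_iff_tendsto_dist_atTop_0.2 <| squeeze_zero (fun _ => dist_nonneg)
      (fun p => abs_log_sub_log_le (hF p.1) (hF p.2)) hv
  obtain ⟨L, hL⟩ := cauchySeq_tendsto_of_complete hlog
  refine ⟨exp L, exp_pos L, ?_⟩
  simpa only [exp_log (hF _)] using hL.rexp

theorem cauchySeq_of_tendsto_zero (hF : ∀ n, 0 < F (u n))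
    (hv : Tendsto (fun p : β × β => vIb F (u p.1) (u p.2)) atTop (nhds 0)) :
    CauchySeq u := by
  obtain ⟨ℓ, -, hℓ⟩ := exists_tendsto_pos_of_tendsto_zero hF hv
  have hfst : Tendsto (fun p : β × β => F (u p.1)) atTop (nhds ℓ) := by
    rw [← prod_atTop_atTop_eq]; exact hℓ.comp tendsto_fst
  have hsnd : Tendsto (fun p : β × β => F (u p.2)) atTop (nhds ℓ) := by
    rw [← prod_atTop_atTop_eq]; exact hℓ.comp tendsto_snd
  have hbound := ((hv.div_const 2).rexp.sub_const 1).mul (hfst.max hsnd)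
  rw [zero_div, exp_zero, sub_self, zero_mul] at hbound
  exact cauchySeq_iff_tendsto_dist_atTop_0.2 <|
    squeeze_zero (fun _ => dist_nonneg) (fun p => dist_le (hF p.1) (hF p.2)) hbound

end Sequence

end vIb

theorem stmt_19_general {X : Type*} [MetricSpace X] [CompleteSpace X] (M : Set X)
    (F : X → ℝ) (hFpos : ∀ x ∉ M, 0 < F x)
    (Ftilde : X → ℝ) (hFtCont : Continuous Ftilde)
    (hFtM : ∀ x ∈ M, Ftilde x = 0) (hFtF : ∀ x ∉ M, Ftilde x = F x) :
    ∀ u : ℕ → X, (∀ n, u n ∉ M) →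
      (∀ ε > (0 : ℝ), ∃ N : ℕ, ∀ m ≥ N, ∀ n ≥ N, vIb F (u m) (u n) < ε) →
      ∃ x, x ∉ M ∧ Tendsto (fun n => vIb F (u n) x) atTop (nhds 0) := by
  intro u hu hCauchy
  have hF : ∀ n, 0 < F (u n) := fun n => hFpos _ (hu n)
  have hv : Tendsto (fun p : ℕ × ℕ => vIb F (u p.1) (u p.2)) atTop (nhds 0) := by
    refine Metric.tendsto_atTop.2 fun ε hε => ?_
    obtain ⟨N, hN⟩ := hCauchy ε hε
    refine ⟨(N, N), fun p hp => ?_⟩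
    rw [Real.dist_eq, sub_zero, abs_of_nonneg (vIb.nonneg (hF _) (hF _))]
    exact hN _ hp.1 _ hp.2
  obtain ⟨ℓ, hℓ, hFℓ⟩ := vIb.exists_tendsto_pos_of_tendsto_zero hF hv
  obtain ⟨x, hx⟩ := cauchySeq_tendsto_of_complete (vIb.cauchySeq_of_tendsto_zero hF hv)
  have hFtx : Ftilde x = ℓ :=
    tendsto_nhds_unique ((hFtCont.tendsto x).comp hx)
      (hFℓ.congr fun n => (hFtF _ (hu n)).symm)
  have hxM : x ∉ M := fun hxM => hℓ.ne' (hFtx ▸ hFtM x hxM)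
  have hFx : F x = ℓ := (hFtF x hxM).symm.trans hFtx
  exact ⟨x, hxM, vIb.tendsto_zero_of_tendsto hx (hFx ▸ hFℓ) (hFx ▸ hℓ.ne')⟩

theorem stmt_19 {X : Type*} [MetricSpace X] [CompleteSpace X] (M : Set X)
    (hMclosed : IsClosed M) (hMne : M.Nonempty) (hMproper : M ≠ Set.univ)
    (F : X → ℝ) (hFpos : ∀ x ∉ M, 0 < F x)
    (Ftilde : X → ℝ) (hFtCont : Continuous Ftilde)
    (hFtM : ∀ x ∈ M, Ftilde x = 0) (hFtF : ∀ x ∉ M, Ftilde x = F x) :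
    ∀ u : ℕ → X, (∀ n, u n ∉ M) →
      (∀ ε > (0 : ℝ), ∃ N : ℕ, ∀ m ≥ N, ∀ n ≥ N, vIb F (u m) (u n) < ε) →
      ∃ x, x ∉ M ∧ Tendsto (fun n => vIb F (u n) x) atTop (nhds 0) :=
  stmt_19_general M F hFpos Ftilde hFtCont hFtM hFtF
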